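/- Let X = (x_1,…,x_N) and Y = (y_1,…,y_N) be vectors with each x_k = Σ_{i=0}^{B_x-1} a_{ik} 2^{i}/2^{B_x}, y_k = Σ_{j=0}^{B_y-1} c_{jk} 2^{j}/2^{B_y}, a_{ik}, c_{jk} ∈ {+1,-1}. Define X̄ ⊗ Ȳ = Σ_{k=1}^{N} Σ_{i,j} (σ(a_{ik}) ⊕ σ(c_{jk})) 2^{i+j}. Then the inner product satisfies ⟨X, Y⟩ = (1/2^{B_x+B_y}) · (N(2^{B_x}-1)(2^{B_y}-1) - 2(X̄ ⊗ Ȳ)). -/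

import Mathlib

/-! With σ(t) = (1 - t)/2 and the XOR u ⊕ v = u + v - 2uv, one has σ(a) ⊕ σ(c) = (1 - ac)/2,
so the XOR tableau X̄ ⊗ Ȳ measures how far the digit products a_{ik} c_{jk} fall short of 1.
Expanding x_k y_k digit by digit then gives
2^{B_x+B_y} x_k y_k = (Σ_i 2^i)(Σ_j 2^j) - Σ_{i,j} (1 - a_{ik} c_{jk}) 2^{i+j},
and the geometric sums are 2^{B_x} - 1 and 2^{B_y} - 1. -/

open Finset

theorem xor_sigma_sigma (u v : ℝ) :
    (1 - u) / 2 + (1 - v) / 2 - 2 * ((1 - u) / 2) * ((1 - v) / 2) = (1 - u * v) / 2 := by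
  ring

theorem sum_digits_mul_sum_digits {R : Type*} [CommRing R] (b : R) (m n : ℕ) (a c : ℕ → R) :
    (∑ i ∈ range m, a i * b ^ i) * (∑ j ∈ range n, c j * b ^ j) =
      (∑ i ∈ range m, b ^ i) * (∑ j ∈ range n, b ^ j) -
        ∑ i ∈ range m, ∑ j ∈ range n, (1 - a i * c j) * b ^ (i + j) := by
  simp only [sum_mul_sum, ← sum_sub_distrib]
  refine sum_congr rfl fun i _ => sum_congr rfl fun j _ => ?_
  ring

theorem sum_range_two_pow (n : ℕ) : ∑ i ∈ range n, (2 : ℝ) ^ i = 2 ^ n - 1 := by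
  rw [← geom_sum_mul]
  norm_num

theorem binary_fraction_mul (m n : ℕ) (a c : ℕ → ℝ) :
    (∑ i ∈ range m, a i * 2 ^ i) / 2 ^ m * ((∑ j ∈ range n, c j * 2 ^ j) / 2 ^ n) =
      1 / 2 ^ (m + n) * ((2 ^ m - 1) * (2 ^ n - 1) -
        2 * ∑ i ∈ range m, ∑ j ∈ range n, (1 - a i * c j) / 2 * 2 ^ (i + j)) := by
  rw [div_mul_div_comm, sum_digits_mul_sum_digits, sum_range_two_pow, sum_range_two_pow]
  simp only [mul_sum, pow_add]
  field_simp

theorem stmt_8_general (N Bx By : ℕ)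
    (a c : ℕ → ℕ → ℝ)
    (x y : ℕ → ℝ)
    (hx : ∀ k < N, x k = (∑ i ∈ Finset.range Bx, a i k * 2 ^ i) / 2 ^ Bx)
    (hy : ∀ k < N, y k = (∑ j ∈ Finset.range By, c j k * 2 ^ j) / 2 ^ By)
    (σ : ℝ → ℝ) (hσ : ∀ t, σ t = (1 - t) / 2)
    (xor : ℝ → ℝ → ℝ) (hxor : ∀ u v, xor u v = u + v - 2 * u * v)
    (T : ℝ)
    (hT : T = ∑ k ∈ Finset.range N, ∑ i ∈ Finset.range Bx,
      ∑ j ∈ Finset.range By, xor (σ (a i k)) (σ (c j k)) * 2 ^ (i + j)) :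
    ∑ k ∈ Finset.range N, x k * y k =
      (1 / 2 ^ (Bx + By)) * (N * (2 ^ Bx - 1) * (2 ^ By - 1) - 2 * T) := by
  have hxor_sigma : ∀ u v, xor (σ u) (σ v) = (1 - u * v) / 2 := fun u v => by
    rw [hxor, hσ, hσ, xor_sigma_sigma]
  calc ∑ k ∈ range N, x k * y k
      = ∑ k ∈ range N, 1 / 2 ^ (Bx + By) * ((2 ^ Bx - 1) * (2 ^ By - 1) -
          2 * ∑ i ∈ range Bx, ∑ j ∈ range By, (1 - a i k * c j k) / 2 * 2 ^ (i + j)) :=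
        sum_congr rfl fun k hk => by
          rw [hx k (mem_range.1 hk), hy k (mem_range.1 hk), binary_fraction_mul]
    _ = _ := by
        simp only [hT, hxor_sigma, ← mul_sum, sum_sub_distrib, sum_const, card_range, nsmul_eq_mul]
        ring

/-- Inner product of XFBQ-representable vectors: with x_k, y_k given by signed
binary digits a_{ik}, c_{jk} ∈ {+1,-1}, σ(t) = (1-t)/2, ⊕ the XOR on {0,1},
and X̄ ⊗ Ȳ = Σ_k Σ_{i,j} (σ(a_{ik}) ⊕ σ(c_{jk})) 2^{i+j}, one has
⟨X,Y⟩ = (1/2^{B_x+B_y}) (N(2^{B_x}-1)(2^{B_y}-1) - 2 (X̄ ⊗ Ȳ)). -/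
theorem stmt_8 (N Bx By : ℕ) (hBx : 0 < Bx) (hBy : 0 < By)
    (a c : ℕ → ℕ → ℝ)
    (ha : ∀ i < Bx, ∀ k < N, a i k = 1 ∨ a i k = -1)
    (hc : ∀ j < By, ∀ k < N, c j k = 1 ∨ c j k = -1)
    (x y : ℕ → ℝ)
    (hx : ∀ k < N, x k = (∑ i ∈ Finset.range Bx, a i k * 2 ^ i) / 2 ^ Bx)
    (hy : ∀ k < N, y k = (∑ j ∈ Finset.range By, c j k * 2 ^ j) / 2 ^ By)
    (σ : ℝ → ℝ) (hσ : ∀ t, σ t = (1 - t) / 2)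
    (xor : ℝ → ℝ → ℝ) (hxor : ∀ u v, xor u v = u + v - 2 * u * v)
    (T : ℝ)
    (hT : T = ∑ k ∈ Finset.range N, ∑ i ∈ Finset.range Bx,
      ∑ j ∈ Finset.range By, xor (σ (a i k)) (σ (c j k)) * 2 ^ (i + j)) :
    ∑ k ∈ Finset.range N, x k * y k =
      (1 / 2 ^ (Bx + By)) * (N * (2 ^ Bx - 1) * (2 ^ By - 1) - 2 * T) :=
  stmt_8_general N Bx By a c x y hx hy σ hσ xor hxor T hT
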